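/- Let S be a finite set of closed segments in the upper half-plane, each of unit length, each with exactly one endpoint on the x-axis (the ground line). Let s_ℓ and s_r be two intersecting segments of S, and let G(s_ℓ, s_r) be the intersection graph of the segments of S that intersect both s_ℓ and s_r and whose grounded endpoints lie between those of s_ℓ and s_r on the x-axis. Then the ordering of these segments by the x-coordinate of their grounded endpoints is umbrella-free: for any three segments s_a, s_c, s_b appearing in this order, if s_a intersects s_b then s_c intersects s_a or s_c intersects s_b. -/

import Mathlib

/-- The grounded point `(x, 0)`. -/
noncomputable def gpt (x : ℝ) : EuclideanSpace ℝ (Fin 2) := WithLp.toLp 2 ![x, 0]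

/-- The grounded segment with grounded endpoint `(x,0)` and free endpoint `f`. -/
noncomputable def GSeg (x : ℝ) (f : EuclideanSpace ℝ (Fin 2)) :
    Set (EuclideanSpace ℝ (Fin 2)) := segment ℝ (gpt x) f

/-- A grounded unit-length segment: the free endpoint lies strictly above the
x-axis and the segment has Euclidean length 1. -/
def IsGUnit (x : ℝ) (f : EuclideanSpace ℝ (Fin 2)) : Prop :=
  f 1 > 0 ∧ dist (gpt x) f = 1

/-!
Suppose `s_a` and `s_b` cross at `p` while `s_c` misses both. Starting on the base of the
triangle `A p B` (with `A = (x_a, 0)`, `B = (x_b, 0)`), the segment `s_c` cannot leave this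
triangle, so its free end is `F = α A + β B + γ p` with convex weights and `γ > 0`. It suffices to
show `β = 0`, for then `F` lies on the edge `A p ⊆ s_a`.

The closed unit disk around `C = (x_c, 0)` contains `p`. If `x_c - x_a ≤ 1` and `x_b - x_c ≤ 1`
it contains `A` and `B` too, while `|F - C| = 1`; strict convexity of the disk then forces `β = 0`.
If `x_b - x_c > 1` (hence `x_c - x_a < 1`), the segment `s_c` crosses `s_ℓ`, so `F` lies weakly
beyond the line of `s_ℓ`. Unless that already gives `β = 0`, the line meets the edge `B p` in a
point `W` of `s_b ∩ s_ℓ` and `F` lies in the triangle `A W p`; `W` is strictly inside the disk,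
being within distance 1 of `(x_ℓ, 0)` and to the right of `C`, so convexity again gives `β = 0`.
The case `x_c - x_a > 1` is the mirror image, with `s_r` in place of `s_ℓ`.
-/

open Set AffineMap

local notation "ℝ²" => EuclideanSpace ℝ (Fin 2)

@[simp] lemma gpt_apply_zero (x : ℝ) : gpt x 0 = x := rfl

@[simp] lemma gpt_apply_one (x : ℝ) : gpt x 1 = 0 := rfl

@[simp] lemma lineMap_apply_coord {ι : Type*} (a b : EuclideanSpace ℝ ι) (t : ℝ) (i : ι) :
    lineMap a b t i = a i + t * (b i - a i) := by
  simp only [lineMap_apply_module', PiLp.add_apply, PiLp.smul_apply, PiLp.sub_apply, smul_eq_mul]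
  ring

lemma ext_fin_two {z w : ℝ²} (h0 : z 0 = w 0) (h1 : z 1 = w 1) : z = w := by
  ext i; fin_cases i <;> assumption

section Grounded

variable {x y : ℝ} {f g q z : ℝ²}

lemma mem_GSeg_iff :
    z ∈ GSeg x f ↔ ∃ t ∈ Icc (0 : ℝ) 1, z 0 = x + t * (f 0 - x) ∧ z 1 = t * f 1 := by
  simp only [GSeg, segment_eq_image_lineMap, mem_image]
  constructor
  · rintro ⟨t, ht, rfl⟩
    exact ⟨t, ht, by simp, by simp⟩
  · rintro ⟨t, ht, h0, h1⟩
    exact ⟨t, ht, ext_fin_two (by simp [h0]) (by simp [h1])⟩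

lemma isGUnit_iff : IsGUnit x f ↔ 0 < f 1 ∧ (f 0 - x) ^ 2 + f 1 ^ 2 = 1 := by
  rw [IsGUnit, dist_comm, EuclideanSpace.dist_eq, Real.sqrt_eq_one, Fin.sum_univ_two]
  simp [Real.dist_eq, sq_abs]

lemma GSeg_subset_of_mem (hq : q ∈ GSeg x f) : GSeg x q ⊆ GSeg x f :=
  (convex_segment _ _).segment_subset (left_mem_segment ℝ _ _) hq

lemma apply_one_nonneg_of_mem_GSeg (hf : 0 < f 1) (hz : z ∈ GSeg x f) : 0 ≤ z 1 := by
  obtain ⟨t, ht, -, h1⟩ := mem_GSeg_iff.1 hz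
  rw [h1]; exact mul_nonneg ht.1 hf.le

lemma eq_of_mem_GSeg_of_apply_one_eq_zero (hf : 0 < f 1) (hz : z ∈ GSeg x f) (h : z 1 = 0) :
    z 0 = x := by
  obtain ⟨t, -, h0, h1⟩ := mem_GSeg_iff.1 hz
  obtain rfl : t = 0 := by simpa [hf.ne'] using h1.symm.trans h
  simpa using h0

lemma apply_one_pos_of_mem_inter (hf : 0 < f 1) (hg : 0 < g 1) (hxy : x ≠ y)
    (hzf : z ∈ GSeg x f) (hzg : z ∈ GSeg y g) : 0 < z 1 := by
  refine (apply_one_nonneg_of_mem_GSeg hf hzf).lt_of_ne fun h ↦ hxy ?_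
  rw [← eq_of_mem_GSeg_of_apply_one_eq_zero hf hzf h.symm,
    eq_of_mem_GSeg_of_apply_one_eq_zero hg hzg h.symm]

lemma IsGUnit.sq_add_sq_le_one (hf : IsGUnit x f) (hz : z ∈ GSeg x f) :
    (z 0 - x) ^ 2 + z 1 ^ 2 ≤ 1 := by
  obtain ⟨t, ⟨ht0, ht1⟩, h0, h1⟩ := mem_GSeg_iff.1 hz
  have hunit := (isGUnit_iff.1 hf).2
  calc (z 0 - x) ^ 2 + z 1 ^ 2 = t ^ 2 := by rw [h0, h1]; linear_combination t ^ 2 * hunit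
    _ ≤ 1 := pow_le_one₀ ht0 ht1

lemma exists_lineMap_eq_of_mem_GSeg (hf : 0 < f 1) (hq : q ∈ GSeg x f) (hq1 : 0 < q 1)
    (hz : z ∈ GSeg x f) : ∃ μ : ℝ, 0 ≤ μ ∧ lineMap (gpt x) q μ = z := by
  obtain ⟨s, -, hq0, hq1'⟩ := mem_GSeg_iff.1 hq
  obtain ⟨t, -, hz0, hz1⟩ := mem_GSeg_iff.1 hz
  refine ⟨z 1 / q 1, div_nonneg (apply_one_nonneg_of_mem_GSeg hf hz) hq1.le,
    ext_fin_two ?_ (by simp only [lineMap_apply_coord, gpt_apply_one]; field_simp; ring)⟩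
  simp only [lineMap_apply_coord, gpt_apply_zero]
  field_simp
  rw [hq0, hq1', hz0, hz1]
  ring

/-- Twice the signed area of the triangle `(x, 0)`, `q`, `z`; for `q` above the axis it is
positive when `z` lies to the right of the line through `(x, 0)` and `q`. -/
def side (x : ℝ) (q z : ℝ²) : ℝ := q 1 * (z 0 - x) - (q 0 - x) * z 1

@[simp] lemma side_gpt : side x q (gpt y) = q 1 * (y - x) := by simp [side]

lemma side_lineMap (a b : ℝ²) (t : ℝ) :
    side x q (lineMap a b t) = (1 - t) * side x q a + t * side x q b := by
  simp only [side, lineMap_apply_coord]; ring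

lemma side_eq_zero_of_mem_GSeg (hz : z ∈ GSeg x f) : side x f z = 0 := by
  obtain ⟨t, -, h0, h1⟩ := mem_GSeg_iff.1 hz
  rw [side, h0, h1]; ring

lemma mem_GSeg_of_side_eq_zero (hq : 0 < q 1) (hz0 : 0 ≤ z 1) (hz1 : z 1 ≤ q 1)
    (h : side x q z = 0) : z ∈ GSeg x q := by
  refine mem_GSeg_iff.2 ⟨z 1 / q 1, ⟨by positivity, (div_le_one hq).2 hz1⟩, ?_, by field_simp⟩
  rw [side] at h
  field_simp
  linear_combination h

lemma side_nonpos_of_mem_inter (hf : 0 < f 1) (hxy : x < y) (hzg : z ∈ GSeg y g)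
    (hzf : z ∈ GSeg x f) : side x f g ≤ 0 := by
  rw [GSeg, segment_eq_image_lineMap] at hzg
  obtain ⟨t, ⟨ht0, ht1⟩, rfl⟩ := hzg
  have h := side_eq_zero_of_mem_GSeg hzf
  rw [side_lineMap, side_gpt] at h
  by_contra! hg
  have hy := mul_pos hf (sub_pos.2 hxy)
  rcases ht0.lt_or_eq with ht | rfl
  · nlinarith [mul_nonneg (sub_nonneg.2 ht1) hy.le]
  · linarith

lemma sq_add_sq_lt_one_of_far {c : ℝ} (hf : IsGUnit x f) (hg : IsGUnit y g) (hzf : z ∈ GSeg x f)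
    (hzg : z ∈ GSeg y g) (hxc : x < c) (hcy : 1 < y - c) : (z 0 - c) ^ 2 + z 1 ^ 2 < 1 := by
  have h1 := hf.sq_add_sq_le_one hzf
  have h2 := hg.sq_add_sq_le_one hzg
  have hz : c < z 0 := by nlinarith [sq_nonneg (z 1)]
  nlinarith

end Grounded

lemma sq_add_sq_convex_comb_add_le {c₁ c₂ c₃ : ℝ} (h₁ : 0 ≤ c₁) (h₂ : 0 ≤ c₂) (h₃ : 0 ≤ c₃)
    (hc : c₁ + c₂ + c₃ = 1) (x₁ x₂ x₃ y₁ y₂ y₃ : ℝ) :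
    (c₁ * x₁ + c₂ * x₂ + c₃ * x₃) ^ 2 + (c₁ * y₁ + c₂ * y₂ + c₃ * y₃) ^ 2
      + c₂ * c₃ * ((x₂ - x₃) ^ 2 + (y₂ - y₃) ^ 2)
      ≤ c₁ * (x₁ ^ 2 + y₁ ^ 2) + c₂ * (x₂ ^ 2 + y₂ ^ 2) + c₃ * (x₃ ^ 2 + y₃ ^ 2) := by
  have key : c₁ * (x₁ ^ 2 + y₁ ^ 2) + c₂ * (x₂ ^ 2 + y₂ ^ 2) + c₃ * (x₃ ^ 2 + y₃ ^ 2)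
      - ((c₁ * x₁ + c₂ * x₂ + c₃ * x₃) ^ 2 + (c₁ * y₁ + c₂ * y₂ + c₃ * y₃) ^ 2
        + c₂ * c₃ * ((x₂ - x₃) ^ 2 + (y₂ - y₃) ^ 2))
      = c₁ * c₂ * ((x₁ - x₂) ^ 2 + (y₁ - y₂) ^ 2) + c₁ * c₃ * ((x₁ - x₃) ^ 2 + (y₁ - y₃) ^ 2) := by
    obtain rfl : c₁ = 1 - c₂ - c₃ := by linarith
    ring
  have := mul_nonneg (mul_nonneg h₁ h₂) (add_nonneg (sq_nonneg (x₁ - x₂)) (sq_nonneg (y₁ - y₂)))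
  have := mul_nonneg (mul_nonneg h₁ h₃) (add_nonneg (sq_nonneg (x₁ - x₃)) (sq_nonneg (y₁ - y₃)))
  linarith

lemma sq_add_sq_le_one_of_between {xa xb xc px py : ℝ} (ha : (px - xa) ^ 2 + py ^ 2 ≤ 1)
    (hb : (px - xb) ^ 2 + py ^ 2 ≤ 1) (hac : xa ≤ xc) (hcb : xc ≤ xb) :
    (px - xc) ^ 2 + py ^ 2 ≤ 1 := by
  rcases le_total xc px with h | h <;> nlinarith

/-- `z = α • (xa, 0) + β • (xb, 0) + γ • p`, a convex combination with `γ > 0`. -/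
def TriangleWeights (xa xb : ℝ) (p z : ℝ²) (α β γ : ℝ) : Prop :=
  0 ≤ α ∧ 0 ≤ β ∧ 0 < γ ∧ α + β + γ = 1 ∧ z 0 = α * xa + β * xb + γ * p 0 ∧ z 1 = γ * p 1

section Triangle

variable {xa xb xc : ℝ} {fa fb fc p z : ℝ²}

lemma exists_triangleWeights_of_side (hab : xa < xb) (hp : 0 < p 1) (hz : 0 < z 1)
    (ha : 0 ≤ side xa p z) (hb : side xb p z ≤ 0) :
    ∃ α β γ, TriangleWeights xa xb p z α β γ := by
  have hd : 0 < p 1 * (xb - xa) := mul_pos hp (sub_pos.2 hab)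
  have hne := (sub_pos.2 hab).ne'
  refine ⟨-side xb p z / (p 1 * (xb - xa)), side xa p z / (p 1 * (xb - xa)), z 1 / p 1,
    div_nonneg (neg_nonneg.2 hb) hd.le, div_nonneg ha hd.le, div_pos hz hp, ?_, ?_, by field_simp⟩
  all_goals field_simp; simp only [side]; ring

lemma side_free_end_of_not_inter_nonempty (hfc : 0 < fc 1) (hpa : p ∈ GSeg xa fa)
    (hpb : p ∈ GSeg xb fb) (hp : 0 < p 1) (hac : xa < xc) (hcb : xc < xb)
    (hna : ¬(GSeg xc fc ∩ GSeg xa fa).Nonempty) (hnb : ¬(GSeg xc fc ∩ GSeg xb fb).Nonempty) :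
    0 ≤ side xa p fc ∧ side xb p fc ≤ 0 := by
  set c : ℝ → ℝ² := fun t ↦ lineMap (gpt xc) fc t
  set g : ℝ → ℝ := fun t ↦ min (side xa p (c t)) (-side xb p (c t))
  by_contra hout
  have hg0 : 0 < g 0 := by
    simp only [g, c, lineMap_apply_zero, side_gpt, lt_min_iff]
    constructor <;> nlinarith
  have hg1 : g 1 < 0 := by
    simp only [g, c, lineMap_apply_one, min_lt_iff]
    by_contra! h
    exact hout ⟨h.1, by linarith [h.2]⟩
  have hcont : ContinuousOn g (Icc 0 1) := by
    simp only [g, c, side_lineMap]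
    fun_prop
  -- at a zero of `g`, the point `c t` is on one of the lines `A p`, `B p` and inside the other
  obtain ⟨t, ⟨ht0, ht1⟩, hgt⟩ := intermediate_value_Icc' zero_le_one hcont ⟨hg1.le, hg0.le⟩
  have htpos : 0 < t := lt_of_le_of_ne ht0 (by rintro rfl; exact hg0.ne' hgt)
  have hct : c t ∈ GSeg xc fc := lineMap_mem_segment ℝ _ _ ⟨ht0, ht1⟩
  have hy : 0 < c t 1 := by simp only [c, lineMap_apply_coord, gpt_apply_one]; positivity
  have hsum : side xa p (c t) - side xb p (c t) = (xb - xa) * (p 1 - c t 1) := by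
    simp only [side]; ring
  rcases min_eq_iff.1 hgt with ⟨ha, hb⟩ | ⟨hb, ha⟩
  · have hle : c t 1 ≤ p 1 := by nlinarith
    exact hna ⟨c t, hct, GSeg_subset_of_mem hpa (mem_GSeg_of_side_eq_zero hp hy.le hle ha)⟩
  · have hle : c t 1 ≤ p 1 := by nlinarith
    exact hnb ⟨c t, hct, GSeg_subset_of_mem hpb
      (mem_GSeg_of_side_eq_zero hp hy.le hle (neg_eq_zero.1 hb))⟩

lemma inter_nonempty_of_weight_eq_zero (hc : 0 < fc 1) (hfa : 0 < fa 1) (hfb : 0 < fb 1)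
    (hac : xa < xc) (hcb : xc < xb) (hab : (GSeg xa fa ∩ GSeg xb fb).Nonempty)
    (H : ∀ p α β γ, p ∈ GSeg xa fa → p ∈ GSeg xb fb → 0 < p 1 →
      TriangleWeights xa xb p fc α β γ → β = 0) :
    (GSeg xc fc ∩ GSeg xa fa).Nonempty ∨ (GSeg xc fc ∩ GSeg xb fb).Nonempty := by
  rw [or_iff_not_imp_right]
  intro hnb
  by_contra hna
  obtain ⟨p, hpa, hpb⟩ := hab
  have hp := apply_one_pos_of_mem_inter hfa hfb (hac.trans hcb).ne hpa hpb
  obtain ⟨hsa, hsb⟩ := side_free_end_of_not_inter_nonempty hc hpa hpb hp hac hcb hna hnb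
  obtain ⟨α, β, γ, hw⟩ := exists_triangleWeights_of_side (hac.trans hcb) hp hc hsa hsb
  have hβ : β = 0 := H p α β γ hpa hpb hp hw
  obtain ⟨hα, -, hγ, hsum, h0, h1⟩ := hw
  subst hβ
  have hfc : fc ∈ GSeg xa p := mem_GSeg_iff.2
    ⟨γ, ⟨hγ.le, by linarith⟩, by linear_combination h0 + xa * hsum, h1⟩
  exact hna ⟨fc, right_mem_segment _ _ _, GSeg_subset_of_mem hpa hfc⟩

lemma weight_eq_zero_of_near {α β γ : ℝ} (hw : TriangleWeights xa xb p fc α β γ)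
    (hp : 0 < p 1) (hac : xa ≤ xc) (hcb : xc ≤ xb) (hA : xc - xa ≤ 1) (hB : xb - xc ≤ 1)
    (hpC : (p 0 - xc) ^ 2 + p 1 ^ 2 ≤ 1) (hF : (fc 0 - xc) ^ 2 + fc 1 ^ 2 = 1) : β = 0 := by
  obtain ⟨hα, hβ, hγ, hsum, h0, h1⟩ := hw
  have e0 : fc 0 - xc = α * (xa - xc) + β * (xb - xc) + γ * (p 0 - xc) := by
    linear_combination h0 + xc * hsum
  have e1 : fc 1 = α * 0 + β * 0 + γ * p 1 := by linear_combination h1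
  have hJ := sq_add_sq_convex_comb_add_le hα hβ hγ.le hsum (xa - xc) (xb - xc) (p 0 - xc) 0 0 (p 1)
  rw [← e0, ← e1, hF] at hJ
  have hA2 : (xa - xc) ^ 2 ≤ 1 := by nlinarith
  have hB2 : (xb - xc) ^ 2 ≤ 1 := by nlinarith
  have := mul_le_mul_of_nonneg_left hA2 hα
  have := mul_le_mul_of_nonneg_left hB2 hβ
  have := mul_le_mul_of_nonneg_left hpC hγ.le
  have hpos : 0 < γ * ((xb - xc - (p 0 - xc)) ^ 2 + (0 - p 1) ^ 2) :=
    mul_pos hγ (by nlinarith [sq_nonneg (xb - xc - (p 0 - xc))])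
  have : β * (γ * ((xb - xc - (p 0 - xc)) ^ 2 + (0 - p 1) ^ 2)) ≤ 0 := by linarith
  exact le_antisymm (nonpos_of_mul_nonpos_left this hpos) hβ

lemma weight_eq_zero_or_le_of_side {xl μ α β γ : ℝ} {fl : ℝ²}
    (hw : TriangleWeights xa xb p fc α β γ) (hfl : 0 < fl 1) (hla : xl ≤ xa) (hab : xa < xb)
    (hFl : side xl fl fc ≤ 0) (hμ : 0 ≤ μ) (hWl : side xl fl (lineMap (gpt xb) p μ) = 0) :
    β = 0 ∨ (μ < 1 ∧ β * μ ≤ γ * (1 - μ)) := by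
  obtain ⟨hα, hβ, hγ, hsum, h0, h1⟩ := hw
  rw [side_lineMap] at hWl
  have hA : 0 ≤ side xl fl (gpt xa) := by rw [side_gpt]; nlinarith
  have hB : 0 < side xl fl (gpt xb) := by rw [side_gpt]; nlinarith
  have hF : side xl fl fc
      = α * side xl fl (gpt xa) + β * side xl fl (gpt xb) + γ * side xl fl p := by
    simp only [side, gpt_apply_zero, gpt_apply_one, h0, h1]
    linear_combination (fl 1 * xl) * hsum
  rw [hF] at hFl
  have hαA := mul_nonneg hα hA
  rcases le_or_gt 0 (side xl fl p) with hp | hp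
  · left
    have := mul_nonneg hγ.le hp
    exact le_antisymm (nonpos_of_mul_nonpos_left (by linarith) hB) hβ
  · right
    have hμ1 : μ < 1 := by nlinarith
    refine ⟨hμ1, ?_⟩
    have e : (β * μ - γ * (1 - μ)) * side xl fl (gpt xb)
        = μ * (α * side xl fl (gpt xa) + β * side xl fl (gpt xb) + γ * side xl fl p)
          - μ * (α * side xl fl (gpt xa))
          - γ * ((1 - μ) * side xl fl (gpt xb) + μ * side xl fl p) := by ring
    rw [hWl, mul_zero, sub_zero] at e
    have : (β * μ - γ * (1 - μ)) * side xl fl (gpt xb) ≤ 0 := by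
      rw [e]; linarith [mul_nonpos_of_nonneg_of_nonpos hμ hFl, mul_nonneg hμ hαA]
    linarith [nonpos_of_mul_nonpos_left this hB]

lemma weight_eq_zero_of_far {μ α β γ : ℝ} (hw : TriangleWeights xa xb p fc α β γ)
    (hμ1 : μ < 1) (hβμ : β * μ ≤ γ * (1 - μ)) (hA : (xa - xc) ^ 2 ≤ 1)
    (hpC : (p 0 - xc) ^ 2 + p 1 ^ 2 ≤ 1) (hF : (fc 0 - xc) ^ 2 + fc 1 ^ 2 = 1)
    (hWC : (lineMap (gpt xb) p μ 0 - xc) ^ 2 + lineMap (gpt xb) p μ 1 ^ 2 < 1) : β = 0 := by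
  obtain ⟨hα, hβ, hγ, hsum, h0, h1⟩ := hw
  set w := lineMap (gpt xb) p μ
  have hw0 : w 0 = xb + μ * (p 0 - xb) := by simp [w]
  have hw1 : w 1 = μ * p 1 := by simp [w]
  have h1μ : 0 < 1 - μ := sub_pos.2 hμ1
  -- the weight of `w = (1 - μ) B + μ p` in the triangle `A w p`
  set c := β / (1 - μ)
  have hβc : β = c * (1 - μ) := (div_mul_cancel₀ β h1μ.ne').symm
  have hc : 0 ≤ c := div_nonneg hβ h1μ.le
  have hc' : 0 ≤ γ - c * μ := by
    rw [hβc] at hβμ; nlinarith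
  have e0 : fc 0 - xc = α * (xa - xc) + c * (w 0 - xc) + (γ - c * μ) * (p 0 - xc) := by
    rw [hw0]; linear_combination h0 + (xb - xc) * hβc + xc * hsum
  have e1 : fc 1 = α * 0 + c * w 1 + (γ - c * μ) * p 1 := by
    rw [hw1]; linear_combination h1
  have hJ := sq_add_sq_convex_comb_add_le hα hc hc' (by linear_combination hsum - hβc)
    (xa - xc) (w 0 - xc) (p 0 - xc) 0 (w 1) (p 1)
  rw [← e0, ← e1, hF] at hJ
  have hcross := mul_nonneg (mul_nonneg hc hc')
    (add_nonneg (sq_nonneg (w 0 - xc - (p 0 - xc))) (sq_nonneg (w 1 - p 1)))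
  have := mul_le_mul_of_nonneg_left hA hα
  have := mul_le_mul_of_nonneg_left hpC hc'
  obtain hc0 | hc0 := hc.eq_or_lt
  · rw [hβc, ← hc0, zero_mul]
  · have := mul_lt_mul_of_pos_left hWC hc0
    linarith

lemma inter_nonempty_of_near (ha : IsGUnit xa fa) (hb : IsGUnit xb fb) (hc : IsGUnit xc fc)
    (hac : xa < xc) (hcb : xc < xb) (hA : xc - xa ≤ 1) (hB : xb - xc ≤ 1)
    (hab : (GSeg xa fa ∩ GSeg xb fb).Nonempty) :
    (GSeg xc fc ∩ GSeg xa fa).Nonempty ∨ (GSeg xc fc ∩ GSeg xb fb).Nonempty :=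
  inter_nonempty_of_weight_eq_zero hc.1 ha.1 hb.1 hac hcb hab fun _ _ _ _ hpa hpb hp hw ↦
    weight_eq_zero_of_near hw hp hac.le hcb.le hA hB
      (sq_add_sq_le_one_of_between (ha.sq_add_sq_le_one hpa) (hb.sq_add_sq_le_one hpb)
        hac.le hcb.le) (isGUnit_iff.1 hc).2

lemma inter_nonempty_of_far_right {xl : ℝ} {fl : ℝ²} (hl : IsGUnit xl fl)
    (ha : IsGUnit xa fa) (hb : IsGUnit xb fb) (hc : IsGUnit xc fc)
    (hcl : (GSeg xc fc ∩ GSeg xl fl).Nonempty) (hbl : (GSeg xb fb ∩ GSeg xl fl).Nonempty)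
    (hla : xl ≤ xa) (hac : xa < xc) (hcb : xc < xb) (hfar : 1 < xb - xc)
    (hab : (GSeg xa fa ∩ GSeg xb fb).Nonempty) :
    (GSeg xc fc ∩ GSeg xa fa).Nonempty ∨ (GSeg xc fc ∩ GSeg xb fb).Nonempty := by
  obtain ⟨u, huc, hul⟩ := hcl
  obtain ⟨w, hwb, hwl⟩ := hbl
  have hFl := side_nonpos_of_mem_inter hl.1 (hla.trans_lt hac) huc hul
  have hWC := sq_add_sq_lt_one_of_far hl hb hwl hwb (hla.trans_lt hac) hfar
  refine inter_nonempty_of_weight_eq_zero hc.1 ha.1 hb.1 hac hcb hab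
    fun p α β γ hpa hpb hp hw ↦ ?_
  obtain ⟨μ, hμ, rfl⟩ := exists_lineMap_eq_of_mem_GSeg hb.1 hpb hp hwb
  have hpA := ha.sq_add_sq_le_one hpa
  have hpB := hb.sq_add_sq_le_one hpb
  have hA : xc - xa < 1 := by
    nlinarith [sq_nonneg (p 0 - xa - 1), sq_nonneg (xb - p 0 - 1), mul_pos hp hp]
  rcases weight_eq_zero_or_le_of_side hw hl.1 hla (hac.trans hcb) hFl hμ
    (side_eq_zero_of_mem_GSeg hwl) with hβ | ⟨hμ1, hβμ⟩
  · exact hβ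
  · exact weight_eq_zero_of_far hw hμ1 hβμ (by nlinarith)
      (sq_add_sq_le_one_of_between hpA hpB hac.le hcb.le) (isGUnit_iff.1 hc).2 hWC

end Triangle

section Reflection

variable {x y : ℝ} {f g z : ℝ²}

def reflect (z : ℝ²) : ℝ² := WithLp.toLp 2 ![-z 0, z 1]

@[simp] lemma reflect_apply_zero (z : ℝ²) : reflect z 0 = -z 0 := rfl

@[simp] lemma reflect_apply_one (z : ℝ²) : reflect z 1 = z 1 := rfl

@[simp] lemma reflect_reflect (z : ℝ²) : reflect (reflect z) = z :=
  ext_fin_two (by simp) (by simp)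

lemma reflect_mem_GSeg_iff : reflect z ∈ GSeg (-x) (reflect f) ↔ z ∈ GSeg x f := by
  simp only [mem_GSeg_iff, reflect_apply_zero, reflect_apply_one]
  constructor <;> rintro ⟨t, ht, h0, h1⟩ <;> exact ⟨t, ht, by linarith, h1⟩

lemma isGUnit_reflect_iff : IsGUnit (-x) (reflect f) ↔ IsGUnit x f := by
  simp only [isGUnit_iff, reflect_apply_zero, reflect_apply_one]
  constructor <;> rintro ⟨h1, h2⟩ <;> exact ⟨h1, by linear_combination h2⟩

lemma inter_nonempty_reflect_iff :
    (GSeg (-x) (reflect f) ∩ GSeg (-y) (reflect g)).Nonempty ↔ (GSeg x f ∩ GSeg y g).Nonempty := by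
  constructor
  · rintro ⟨z, h1, h2⟩
    rw [← reflect_reflect z, reflect_mem_GSeg_iff] at h1 h2
    exact ⟨_, h1, h2⟩
  · rintro ⟨z, h1, h2⟩
    exact ⟨_, reflect_mem_GSeg_iff.2 h1, reflect_mem_GSeg_iff.2 h2⟩

end Reflection

lemma inter_nonempty_of_far_left {xa xb xc xr : ℝ} {fa fb fc fr : ℝ²}
    (hr : IsGUnit xr fr) (ha : IsGUnit xa fa) (hb : IsGUnit xb fb) (hc : IsGUnit xc fc)
    (hcr : (GSeg xc fc ∩ GSeg xr fr).Nonempty) (har : (GSeg xa fa ∩ GSeg xr fr).Nonempty)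
    (hbr : xb ≤ xr) (hac : xa < xc) (hcb : xc < xb) (hfar : 1 < xc - xa)
    (hab : (GSeg xa fa ∩ GSeg xb fb).Nonempty) :
    (GSeg xc fc ∩ GSeg xa fa).Nonempty ∨ (GSeg xc fc ∩ GSeg xb fb).Nonempty := by
  have := inter_nonempty_of_far_right (isGUnit_reflect_iff.2 hr) (isGUnit_reflect_iff.2 hb)
    (isGUnit_reflect_iff.2 ha) (isGUnit_reflect_iff.2 hc) (inter_nonempty_reflect_iff.2 hcr)
    (inter_nonempty_reflect_iff.2 har) (neg_le_neg hbr) (neg_lt_neg hcb) (neg_lt_neg hac)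
    (by linarith) (inter_nonempty_reflect_iff.2 (by rwa [inter_comm]))
  rwa [inter_nonempty_reflect_iff, inter_nonempty_reflect_iff, or_comm] at this

theorem stmt_10_general
    (xl xr xa xc xb : ℝ) (fl fr fa fc fb : EuclideanSpace ℝ (Fin 2))
    (hl : IsGUnit xl fl) (hr : IsGUnit xr fr)
    (ha : IsGUnit xa fa) (hc : IsGUnit xc fc) (hb : IsGUnit xb fb)
    (har : (GSeg xa fa ∩ GSeg xr fr).Nonempty)
    (hcl : (GSeg xc fc ∩ GSeg xl fl).Nonempty) (hcr : (GSeg xc fc ∩ GSeg xr fr).Nonempty)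
    (hbl : (GSeg xb fb ∩ GSeg xl fl).Nonempty)
    (horder : xl ≤ xa ∧ xa < xc ∧ xc < xb ∧ xb ≤ xr)
    (hab : (GSeg xa fa ∩ GSeg xb fb).Nonempty) :
    (GSeg xc fc ∩ GSeg xa fa).Nonempty ∨ (GSeg xc fc ∩ GSeg xb fb).Nonempty := by
  obtain ⟨hla, hac, hcb, hbr⟩ := horder
  rcases le_or_gt (xb - xc) 1 with hB | hB
  · rcases le_or_gt (xc - xa) 1 with hA | hA
    · exact inter_nonempty_of_near ha hb hc hac hcb hA hB hab
    · exact inter_nonempty_of_far_left hr ha hb hc hcr har hbr hac hcb hA hab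
  · exact inter_nonempty_of_far_right hl ha hb hc hcl hbl hla hac hcb hB hab

/-- Umbrella-freeness of the left-to-right ordering of grounded unit segments that
intersect two given intersecting segments `s_ℓ`, `s_r` and are grounded between them. -/
theorem stmt_10
    (xl xr xa xc xb : ℝ) (fl fr fa fc fb : EuclideanSpace ℝ (Fin 2))
    (hl : IsGUnit xl fl) (hr : IsGUnit xr fr)
    (ha : IsGUnit xa fa) (hc : IsGUnit xc fc) (hb : IsGUnit xb fb)
    (hlr : (GSeg xl fl ∩ GSeg xr fr).Nonempty)
    (hal : (GSeg xa fa ∩ GSeg xl fl).Nonempty) (har : (GSeg xa fa ∩ GSeg xr fr).Nonempty)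
    (hcl : (GSeg xc fc ∩ GSeg xl fl).Nonempty) (hcr : (GSeg xc fc ∩ GSeg xr fr).Nonempty)
    (hbl : (GSeg xb fb ∩ GSeg xl fl).Nonempty) (hbr : (GSeg xb fb ∩ GSeg xr fr).Nonempty)
    (horder : xl ≤ xa ∧ xa < xc ∧ xc < xb ∧ xb ≤ xr)
    (hab : (GSeg xa fa ∩ GSeg xb fb).Nonempty) :
    (GSeg xc fc ∩ GSeg xa fa).Nonempty ∨ (GSeg xc fc ∩ GSeg xb fb).Nonempty :=
  stmt_10_general xl xr xa xc xb fl fr fa fc fb hl hr ha hc hb har hcl hcr hbl horder hab
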